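/- arXiv:2406.03043 — 8 statements merged into one kernel-verified Lean document; each statement's English description precedes it below -/
import Mathlib

section
/- Let Γ be a k-regular graph on v vertices whose adjacency matrix has smallest eigenvalue s. Then for any nonempty vertex subset Y, the average degree of the induced subgraph on Y is at least |Y|·(k−s)/v + s. -/
/-!
Write `χ` for the indicator vector of `Y`, `A` for the adjacency matrix and `n = |V|`.
Since every eigenvalue of `A` is at least `s`, `A - s • 1` is positive semidefinite, so
`s ‖z‖² ≤ zᵀ A z` for every `z`. Apply this to `z = χ - (|Y| / n) • 1`, the component of `χ`
orthogonal to the all-ones vector, which is an eigenvector of `A` with eigenvalue `k`: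
this gives `χᵀ A χ ≥ s |Y| + (k - s) |Y|² / n`, and `χᵀ A χ` is twice the number of edges in `Y`.
-/

open Finset Matrix

namespace Matrix

variable {n : Type*} [Fintype n]

theorem IsHermitian.posSemidef_sub_smul_one [DecidableEq n] {A : Matrix n n ℝ}
    (hA : A.IsHermitian) {s : ℝ} (hs : ∀ i, s ≤ hA.eigenvalues i) :
    (A - s • 1).PosSemidef := by
  refine posSemidef_iff_isHermitian_and_spectrum_nonneg.mpr
    ⟨hA.sub (isHermitian_one.smul (.all s)), ?_⟩
  rw [← Algebra.algebraMap_eq_smul_one, ← spectrum.sub_singleton_eq,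
    hA.spectrum_real_eq_range_eigenvalues]
  rintro _ ⟨_, ⟨i, rfl⟩, _, rfl, rfl⟩
  exact sub_nonneg.mpr (hs i)

theorem IsHermitian.mul_dotProduct_self_le [DecidableEq n] {A : Matrix n n ℝ}
    (hA : A.IsHermitian) {s : ℝ} (hs : ∀ i, s ≤ hA.eigenvalues i) (x : n → ℝ) :
    s * (x ⬝ᵥ x) ≤ x ⬝ᵥ (A *ᵥ x) := by
  have h := (hA.posSemidef_sub_smul_one hs).dotProduct_mulVec_nonneg x
  simp only [star_trivial, sub_mulVec, dotProduct_sub, smul_mulVec, one_mulVec,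
    dotProduct_smul, smul_eq_mul] at h
  linarith

theorem IsSymm.le_dotProduct_mulVec_of_mulVec_one {A : Matrix n n ℝ} (hA : A.IsSymm) {k s : ℝ}
    (hrow : A *ᵥ 1 = k • 1) (hs : ∀ z, s * (z ⬝ᵥ z) ≤ z ⬝ᵥ (A *ᵥ z)) (x : n → ℝ) :
    s * (x ⬝ᵥ x) + (k - s) * (1 ⬝ᵥ x) ^ 2 / Fintype.card n ≤ x ⬝ᵥ (A *ᵥ x) := by
  set N : ℝ := (Fintype.card n : ℝ)
  set S := 1 ⬝ᵥ x
  rcases eq_or_ne N 0 with hN | hN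
  · simpa [hN] using hs x
  have hcol : 1 ᵥ* A = k • 1 := by rw [← hA.eq, vecMul_transpose, hrow]
  have hone : (1 : n → ℝ) ⬝ᵥ 1 = N := by simp [N]
  have h := hs (x - (S / N) • 1)
  simp only [sub_dotProduct, dotProduct_sub, mulVec_sub, mulVec_smul, smul_dotProduct,
    dotProduct_smul, hrow, dotProduct_mulVec 1 A x, hcol, hone, smul_eq_mul] at h
  rw [← dotProduct_comm 1 x, div_mul_cancel₀ S hN, sub_self, mul_zero, sub_zero] at h
  have hsplit : (k - s) * S ^ 2 / N = k * (S / N * S) - s * (S / N * S) := by ring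
  linarith

end Matrix

theorem Finset.indicator_one_dotProduct_self {ι R : Type*} [Fintype ι] [NonAssocSemiring R]
    (Y : Finset ι) : (Y : Set ι).indicator (1 : ι → R) ⬝ᵥ (Y : Set ι).indicator 1 = #Y := by
  classical
  simp [dotProduct, Set.indicator_apply]

theorem Finset.one_dotProduct_indicator_one {ι R : Type*} [Fintype ι] [NonAssocSemiring R]
    (Y : Finset ι) : 1 ⬝ᵥ (Y : Set ι).indicator (1 : ι → R) = #Y := by
  classical
  simp [one_dotProduct, Set.indicator_apply]

namespace SimpleGraph

variable {V α : Type*} [Fintype V] [NonAssocSemiring α] (G : SimpleGraph V) [DecidableRel G.Adj]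

theorem adjMatrix_mulVec_one_of_regular {d : ℕ} (hd : G.IsRegularOfDegree d) :
    G.adjMatrix α *ᵥ 1 = (d : α) • 1 := by
  ext v
  simpa using G.adjMatrix_mulVec_const_apply_of_regular (a := (1 : α)) hd

theorem indicator_dotProduct_mulVec_adjMatrix_indicator (Y : Finset V) :
    (Y : Set V).indicator 1 ⬝ᵥ G.adjMatrix α *ᵥ (Y : Set V).indicator 1 =
      ∑ x ∈ Y, ∑ y ∈ Y, if G.Adj x y then (1 : α) else 0 := by
  classical
  simp_rw [← sum_ite_mem_eq Y, dotProduct_mulVec_adjMatrix]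
  refine sum_congr rfl fun x _ => ?_
  by_cases hx : x ∈ Y
  · simp only [hx, if_true]
    refine sum_congr rfl fun y _ => ?_
    by_cases hy : y ∈ Y <;> simp [hx, hy]
  · simp [hx]

end SimpleGraph

theorem stmt2_general {V : Type*} [Fintype V] [DecidableEq V] (Γ : SimpleGraph V)
    [DecidableRel Γ.Adj] (k : ℕ) (hreg : Γ.IsRegularOfDegree k)
    (hA : (Γ.adjMatrix ℝ).IsHermitian) (s : ℝ)
    (hs_lb : ∀ i, s ≤ hA.eigenvalues i)
    (Y : Finset V) (hY : Y.Nonempty) :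
    (Y.card : ℝ) * ((k : ℝ) - s) / (Fintype.card V) + s ≤
      (∑ x ∈ Y, ∑ y ∈ Y, if Γ.Adj x y then (1 : ℝ) else 0) / Y.card := by
  have key := Γ.isSymm_adjMatrix.le_dotProduct_mulVec_of_mulVec_one
    (Γ.adjMatrix_mulVec_one_of_regular hreg) (hA.mul_dotProduct_self_le hs_lb)
    ((Y : Set V).indicator 1)
  rw [Y.indicator_one_dotProduct_self, Y.one_dotProduct_indicator_one,
    Γ.indicator_dotProduct_mulVec_adjMatrix_indicator] at key
  rw [le_div_iff₀ (by exact_mod_cast hY.card_pos)]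
  calc _ = s * Y.card + (k - s) * (Y.card : ℝ) ^ 2 / Fintype.card V := by ring
    _ ≤ _ := key

theorem stmt2 {V : Type*} [Fintype V] [DecidableEq V] (Γ : SimpleGraph V)
    [DecidableRel Γ.Adj] (k : ℕ) (hreg : Γ.IsRegularOfDegree k)
    (hA : (Γ.adjMatrix ℝ).IsHermitian) (s : ℝ)
    (hs_lb : ∀ i, s ≤ hA.eigenvalues i) (hs_mem : ∃ i, hA.eigenvalues i = s)
    (Y : Finset V) (hY : Y.Nonempty) :
    (Y.card : ℝ) * ((k : ℝ) - s) / (Fintype.card V) + s ≤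
      (∑ x ∈ Y, ∑ y ∈ Y, if Γ.Adj x y then (1 : ℝ) else 0) / Y.card :=
  stmt2_general Γ k hreg hA s hs_lb Y hY
end

section
/- Let M be an n×n symmetric matrix over F₂ of rank r with at least one nonzero diagonal entry. Then there exists an n×r matrix B over F₂ with M = B·Bᵀ. -/
open Matrix Submodule LinearMap Module

abbrev F2' := ZMod 2

lemma two_eq_zero' : (2 : F2') = 0 := by decide

lemma add_self_vec' {n : ℕ} (y : Fin n → F2') : y + y = 0 := by
  rw [← two_smul F2' y, two_eq_zero', zero_smul]

lemma cancel5' {n : ℕ} (p q r : Fin n → F2') : p + q + r + p + q = r := by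
  funext m
  simp only [Pi.add_apply]
  have h : ∀ a b c : F2', a + b + c + a + b = c := by decide
  exact h _ _ _

lemma aba_eq' {n : ℕ} (a b : Fin n → F2') : (a + b) + a = b := by
  rw [add_comm a b, add_assoc, add_self_vec', add_zero]

lemma isSymm_of' {n : ℕ} (A : Matrix (Fin n) (Fin n) F2') (h : ∀ p q, A q p = A p q) :
    A.IsSymm := Matrix.ext fun p q => by rw [Matrix.transpose_apply]; exact h p q

lemma rank_one_step' {n : ℕ} (N : Matrix (Fin n) (Fin n) F2') (v : Fin n → F2') (i : Fin n)
    (hvi : v i = 1) (hrow : ∀ m, N i m = 0) (hcol : ∀ m, N m i = 0) :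
    (Matrix.of fun p q => v p * v q + N p q).rank = N.rank + 1 := by
  set M : Matrix (Fin n) (Fin n) F2' := Matrix.of fun p q => v p * v q + N p q with hM
  have hmv : ∀ x, M *ᵥ x = (v ⬝ᵥ x) • v + N *ᵥ x := by
    intro x
    funext p
    simp only [Matrix.mulVec, dotProduct, hM, Matrix.of_apply, Pi.add_apply, Pi.smul_apply,
      smul_eq_mul, add_mul, Finset.sum_add_distrib]
    congr 1
    rw [Finset.sum_mul]
    apply Finset.sum_congr rfl
    intros; ring
  have hvR : v = M *ᵥ Pi.single i 1 := by
    funext p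
    rw [Matrix.mulVec_single]
    simp [hM, hvi, hcol p]
  have hvmem : v ∈ LinearMap.range M.mulVecLin := ⟨Pi.single i 1, by
    rw [mulVecLin_apply]; exact hvR.symm⟩
  have hrange : LinearMap.range M.mulVecLin = span F2' {v} ⊔ LinearMap.range N.mulVecLin := by
    apply le_antisymm
    · rintro y ⟨x, rfl⟩
      rw [mulVecLin_apply, hmv]
      exact add_mem (mem_sup_left (smul_mem _ _ (subset_span rfl)))
        (mem_sup_right ⟨x, rfl⟩)
    · rw [sup_le_iff]
      refine ⟨(span_singleton_le_iff_mem v _).mpr hvmem, ?_⟩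
      rintro y ⟨x, rfl⟩
      refine ⟨x + (v ⬝ᵥ x) • (Pi.single i 1 : Fin n → F2'), ?_⟩
      rw [mulVecLin_apply, Matrix.mulVec_add, Matrix.mulVec_smul, ← hvR, hmv, mulVecLin_apply,
        aba_eq']
  have hdisj : Disjoint (span F2' {v}) (LinearMap.range N.mulVecLin) := by
    rw [disjoint_def]
    intro y h1 h2
    obtain ⟨c, rfl⟩ := mem_span_singleton.mp h1
    obtain ⟨x, hx⟩ := h2
    have h0 : (N.mulVecLin x) i = 0 := by
      rw [mulVecLin_apply]
      simp [Matrix.mulVec, dotProduct, hrow]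
    rw [hx] at h0
    simp only [Pi.smul_apply, hvi, smul_eq_mul, mul_one] at h0
    rw [h0, zero_smul]
  have key := Submodule.finrank_sup_add_finrank_inf_eq (span F2' {v}) (LinearMap.range N.mulVecLin)
  rw [hdisj.eq_bot, finrank_bot] at key
  have hv0 : v ≠ 0 := by
    intro h; rw [h] at hvi; simp at hvi
  rw [finrank_span_singleton hv0] at key
  show finrank F2' _ = finrank F2' _ + 1
  rw [hrange]
  omega

lemma rank_two_step' {n : ℕ} (N : Matrix (Fin n) (Fin n) F2') (u w : Fin n → F2') (j k : Fin n)
    (huj : u j = 0) (huk : u k = 1) (hwj : w j = 1) (hwk : w k = 0)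
    (hrowj : ∀ m, N j m = 0) (hrowk : ∀ m, N k m = 0)
    (hcolj : ∀ m, N m j = 0) (hcolk : ∀ m, N m k = 0) :
    (Matrix.of fun p q => u p * w q + w p * u q + N p q).rank = N.rank + 2 := by
  set M : Matrix (Fin n) (Fin n) F2' :=
    Matrix.of fun p q => u p * w q + w p * u q + N p q with hM
  have hmv : ∀ x, M *ᵥ x = (w ⬝ᵥ x) • u + (u ⬝ᵥ x) • w + N *ᵥ x := by
    intro x
    funext p
    simp only [Matrix.mulVec, dotProduct, hM, Matrix.of_apply, Pi.add_apply, Pi.smul_apply,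
      smul_eq_mul, add_mul, Finset.sum_add_distrib]
    congr 2
    · rw [Finset.sum_mul]; apply Finset.sum_congr rfl; intros; ring
    · rw [Finset.sum_mul]; apply Finset.sum_congr rfl; intros; ring
  have huR : u = M *ᵥ Pi.single j 1 := by
    funext p
    rw [Matrix.mulVec_single]
    simp [hM, hwj, huj, hcolj p]
  have hwR : w = M *ᵥ Pi.single k 1 := by
    funext p
    rw [Matrix.mulVec_single]
    simp [hM, hwk, huk, hcolk p]
  have humem : u ∈ LinearMap.range M.mulVecLin := ⟨Pi.single j 1, by
    rw [mulVecLin_apply]; exact huR.symm⟩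
  have hwmem : w ∈ LinearMap.range M.mulVecLin := ⟨Pi.single k 1, by
    rw [mulVecLin_apply]; exact hwR.symm⟩
  have hrange : LinearMap.range M.mulVecLin = span F2' {u, w} ⊔ LinearMap.range N.mulVecLin := by
    apply le_antisymm
    · rintro y ⟨x, rfl⟩
      rw [mulVecLin_apply, hmv]
      refine add_mem (mem_sup_left (add_mem ?_ ?_)) (mem_sup_right ⟨x, rfl⟩)
      · exact smul_mem _ _ (subset_span (Set.mem_insert _ _))
      · exact smul_mem _ _ (subset_span (Set.mem_insert_of_mem _ rfl))
    · rw [sup_le_iff]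
      constructor
      · rw [span_le]
        rintro y (rfl | rfl)
        · exact humem
        · exact hwmem
      · rintro y ⟨x, rfl⟩
        refine ⟨x + (w ⬝ᵥ x) • (Pi.single j 1 : Fin n → F2')
            + (u ⬝ᵥ x) • (Pi.single k 1 : Fin n → F2'), ?_⟩
        rw [mulVecLin_apply, Matrix.mulVec_add, Matrix.mulVec_add, Matrix.mulVec_smul,
          Matrix.mulVec_smul, ← huR, ← hwR, hmv, mulVecLin_apply]
        exact cancel5' _ _ _
  have hdisj : Disjoint (span F2' {u, w}) (LinearMap.range N.mulVecLin) := by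
    rw [disjoint_def]
    intro y h1 h2
    obtain ⟨a, b, rfl⟩ := mem_span_pair.mp h1
    obtain ⟨x, hx⟩ := h2
    have h0j : (N.mulVecLin x) j = 0 := by
      rw [mulVecLin_apply]; simp [Matrix.mulVec, dotProduct, hrowj]
    have h0k : (N.mulVecLin x) k = 0 := by
      rw [mulVecLin_apply]; simp [Matrix.mulVec, dotProduct, hrowk]
    rw [hx] at h0j h0k
    simp only [Pi.add_apply, Pi.smul_apply, huj, huk, hwj, hwk, smul_eq_mul, mul_one,
      mul_zero, zero_add, add_zero] at h0j h0k
    rw [h0j, h0k, zero_smul, zero_smul, add_zero]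
  have hu0 : u ≠ 0 := fun h => by rw [h] at huk; simp at huk
  have hw0 : w ≠ 0 := fun h => by rw [h] at hwj; simp at hwj
  have hdisj2 : Disjoint (span F2' {u}) (span F2' {w}) := by
    rw [disjoint_def]
    intro y h1 h2
    obtain ⟨c, rfl⟩ := mem_span_singleton.mp h1
    obtain ⟨d, hd⟩ := mem_span_singleton.mp h2
    have hck : (c • u) k = c := by simp [huk]
    rw [← hd] at hck
    simp [hwk] at hck
    rw [← hck, zero_smul]
  have hpair : finrank F2' (span F2' {u, w}) = 2 := by
    have h1 := Submodule.finrank_sup_add_finrank_inf_eq (span F2' {u}) (span F2' {w})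
    rw [hdisj2.eq_bot, finrank_bot, finrank_span_singleton hu0, finrank_span_singleton hw0] at h1
    have h2 : span F2' ({u, w} : Set (Fin n → F2')) = span F2' {u} ⊔ span F2' {w} := by
      rw [← span_insert]
    rw [h2]
    omega
  have key := Submodule.finrank_sup_add_finrank_inf_eq (span F2' {u, w})
    (LinearMap.range N.mulVecLin)
  rw [hdisj.eq_bot, finrank_bot, hpair] at key
  show finrank F2' _ = finrank F2' _ + 2
  rw [hrange]
  omega

lemma main_decomp' : ∀ (r : ℕ), ∀ {n : ℕ} (M : Matrix (Fin n) (Fin n) F2'),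
    M.IsSymm → M.rank = r → ((∃ i, M i i ≠ 0) ∨ M = 0) →
    ∃ B : Matrix (Fin n) (Fin r) F2', M = B * Bᵀ := by
  intro r
  induction r using Nat.strong_induction_on with
  | _ r IH =>
  intro n M hsym hrank hcond
  have hone : ∀ x : F2', x ≠ 0 → x = 1 := by decide
  rcases hcond with ⟨i, hi⟩ | rfl
  swap
  · -- M = 0
    obtain rfl : r = 0 := by rw [← hrank]; exact Matrix.rank_zero
    refine ⟨0, ?_⟩
    ext p q
    rw [Matrix.mul_apply]
    simp
  · have hMii : M i i = 1 := hone _ hi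
    set v : Fin n → F2' := fun m => M m i with hv
    have hvi : v i = 1 := hMii
    set M' : Matrix (Fin n) (Fin n) F2' := Matrix.of fun p q => M p q + v p * v q with hM'
    have hMpt : ∀ p q, M p q = v p * v q + M' p q := by
      intro p q
      simp only [hM', Matrix.of_apply]
      have : ∀ a b : F2', a = b + (a + b) := by decide
      exact this _ _
    have hM'sym : ∀ p q, M' q p = M' p q := by
      intro p q
      simp only [hM', Matrix.of_apply]
      rw [hsym.apply p q, mul_comm]
    have hrow' : ∀ m, M' i m = 0 := by
      intro m
      show M i m + v i * v m = 0
      rw [hvi, one_mul, show v m = M m i from rfl, hsym.apply i m]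
      have h2 : ∀ a : F2', a + a = 0 := by decide
      exact h2 _
    have hcol' : ∀ m, M' m i = 0 := fun m => by rw [hM'sym i m]; exact hrow' m
    have hMdecomp : M = Matrix.of fun p q => v p * v q + M' p q :=
      Matrix.ext fun p q => hMpt p q
    have hrank1 : M.rank = M'.rank + 1 := by
      rw [hMdecomp]; exact rank_one_step' M' v i hvi hrow' hcol'
    by_cases hd : (∃ m, M' m m ≠ 0) ∨ M' = 0
    · obtain ⟨B', hB'⟩ := IH M'.rank (by omega) M' (isSymm_of' M' hM'sym) rfl hd
      obtain rfl : r = M'.rank + 1 := by omega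
      refine ⟨Matrix.of fun p => Fin.cons (v p) (fun q => B' p q), ?_⟩
      ext p q
      rw [Matrix.mul_apply]
      simp only [Matrix.transpose_apply, Matrix.of_apply]
      rw [Fin.sum_univ_succ]
      simp only [Fin.cons_zero, Fin.cons_succ]
      rw [hMpt p q]
      congr 1
      conv_lhs => rw [hB', Matrix.mul_apply]
      simp only [Matrix.transpose_apply]
    · push_neg at hd
      obtain ⟨hdiag0, hne⟩ := hd
      have hex : ∃ j k, M' j k ≠ 0 := by
        by_contra h
        push_neg at h
        exact hne (Matrix.ext fun p q => h p q)
      obtain ⟨j, k, hjk⟩ := hex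
      have hjk1 : M' j k = 1 := hone _ hjk
      have hkj1 : M' k j = 1 := by rw [hM'sym j k]; exact hjk1
      set u : Fin n → F2' := fun m => M' m j with hu
      set w : Fin n → F2' := fun m => M' m k with hw
      have huj : u j = 0 := hdiag0 j
      have huk : u k = 1 := hkj1
      have hwj : w j = 1 := hjk1
      have hwk : w k = 0 := hdiag0 k
      have hui : u i = 0 := hrow' j
      have hwi : w i = 0 := hrow' k
      set N : Matrix (Fin n) (Fin n) F2' :=
        Matrix.of fun p q => M' p q + u p * w q + w p * u q with hN
      have hM'pt : ∀ p q, M' p q = u p * w q + w p * u q + N p q := by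
        intro p q
        simp only [hN, Matrix.of_apply]
        have : ∀ a b c : F2', a = b + c + (a + b + c) := by decide
        exact this _ _ _
      have hNsym : ∀ p q, N q p = N p q := by
        intro p q
        simp only [hN, Matrix.of_apply]
        rw [hM'sym p q]
        ring
      have hNrowj : ∀ m, N j m = 0 := by
        intro m
        show M' j m + u j * w m + w j * u m = 0
        rw [huj, hwj, zero_mul, one_mul, show u m = M' m j from rfl, ← hM'sym m j]
        have h2 : ∀ a : F2', a + 0 + a = 0 := by decide
        exact h2 _
      have hNrowk : ∀ m, N k m = 0 := by
        intro m
        show M' k m + u k * w m + w k * u m = 0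
        rw [huk, hwk, one_mul, zero_mul, show w m = M' m k from rfl, ← hM'sym m k]
        have h2 : ∀ a : F2', a + a + 0 = 0 := by decide
        exact h2 _
      have hNrowi : ∀ m, N i m = 0 := by
        intro m
        show M' i m + u i * w m + w i * u m = 0
        rw [hui, hwi, zero_mul, zero_mul, hrow' m]
        simp
      have hNcolj : ∀ m, N m j = 0 := fun m => by rw [hNsym j m]; exact hNrowj m
      have hNcolk : ∀ m, N m k = 0 := fun m => by rw [hNsym k m]; exact hNrowk m
      have hNcoli : ∀ m, N m i = 0 := fun m => by rw [hNsym i m]; exact hNrowi m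
      have hM'decomp : M' = Matrix.of fun p q => u p * w q + w p * u q + N p q :=
        Matrix.ext fun p q => hM'pt p q
      have hrank2 : M'.rank = N.rank + 2 := by
        rw [hM'decomp]
        exact rank_two_step' N u w j k huj huk hwj hwk hNrowj hNrowk hNcolj hNcolk
      set c : Fin n → F2' := fun m => v m + u m + w m with hc
      have hci : c i = 1 := by
        simp only [hc, hvi, hui, hwi, add_zero]
      set M₂ : Matrix (Fin n) (Fin n) F2' := Matrix.of fun p q => c p * c q + N p q with hM₂
      have hM₂pt : ∀ p q, M₂ p q = c p * c q + N p q := fun p q => rfl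
      have hrank3 : M₂.rank = N.rank + 1 := rank_one_step' N c i hci hNrowi hNcoli
      have hM₂sym : ∀ p q, M₂ q p = M₂ p q := by
        intro p q
        simp only [hM₂, Matrix.of_apply]
        rw [hNsym p q, mul_comm]
      have hM₂ii : M₂ i i ≠ 0 := by
        rw [hM₂pt i i, hci, hNrowi i]
        decide
      obtain ⟨B₂, hB₂⟩ := IH (N.rank + 1) (by omega) M₂ (isSymm_of' M₂ hM₂sym) hrank3
        (Or.inl ⟨i, hM₂ii⟩)
      set a : Fin n → F2' := fun m => v m + u m with ha
      set b : Fin n → F2' := fun m => v m + w m with hb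
      have key : ∀ p q, M p q = a p * a q + b p * b q + M₂ p q := by
        intro p q
        rw [hMpt p q, hM'pt p q, hM₂pt p q]
        simp only [ha, hb, hc]
        have h3 : ∀ vp vq up uq wp wq nn : F2',
            vp * vq + (up * wq + wp * uq + nn) =
            (vp + up) * (vq + uq) + (vp + wp) * (vq + wq) +
              ((vp + up + wp) * (vq + uq + wq) + nn) := by decide
        exact h3 _ _ _ _ _ _ _
      obtain rfl : r = N.rank + 1 + 1 + 1 := by omega
      refine ⟨Matrix.of fun p => Fin.cons (a p) (Fin.cons (b p) (fun x => B₂ p x)), ?_⟩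
      ext p q
      rw [Matrix.mul_apply, key p q]
      simp only [Matrix.transpose_apply, Matrix.of_apply]
      rw [Fin.sum_univ_succ, Fin.sum_univ_succ]
      simp only [Fin.cons_zero, Fin.cons_succ]
      conv_lhs => rw [hB₂, Matrix.mul_apply]
      simp only [Matrix.transpose_apply]
      ring

theorem stmt3 (n r : ℕ) (M : Matrix (Fin n) (Fin n) (ZMod 2))
    (hsym : M.IsSymm) (hdiag : ∃ i, M i i ≠ 0) (hrank : M.rank = r) :
    ∃ B : Matrix (Fin n) (Fin r) (ZMod 2), M = B * Bᵀ :=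
  main_decomp' r M hsym hrank (Or.inl hdiag)
end

section
/- In the finite field F_{2^h}, there do not exist three distinct nonzero elements a, b, c with a + b + c = 0 and a³ + b³ + c³ = 0. Consequently, the Cayley graph on the additive group F_{2^h}² with connection set S = {(a, a³) : a ∈ F_{2^h}, a ≠ 0} is triangle-free. -/
private lemma no_sol (h : ℕ) :
    ¬ ∃ a b c : GaloisField 2 h, a ≠ 0 ∧ b ≠ 0 ∧ c ≠ 0 ∧ a ≠ b ∧ a ≠ c ∧ b ≠ c ∧
        a + b + c = 0 ∧ a ^ 3 + b ^ 3 + c ^ 3 = 0 := by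
  rintro ⟨a, b, c, ha, hb, hc, -, -, -, h1, h2⟩
  have htwo : (2 : GaloisField 2 h) = 0 := by
    simpa using CharP.cast_eq_zero (GaloisField 2 h) 2
  have hceq : c = a + b := by
    have := CharTwo.neg_eq (R := GaloisField 2 h) (a + b)
    rw [← this]
    linear_combination -h1 + (a + b + c) * htwo
  have key : a * b * c = 0 := by
    rw [hceq] at h2 ⊢
    linear_combination h2 - (a ^ 3 + b ^ 3 + a ^ 2 * b + a * b ^ 2) * htwo
  rcases mul_eq_zero.1 key with hk | hk
  · rcases mul_eq_zero.1 hk with hk | hk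
    exacts [ha hk, hb hk]
  · exact hc hk

theorem stmt4 (h : ℕ) (hh : 0 < h) :
    (¬ ∃ a b c : GaloisField 2 h, a ≠ 0 ∧ b ≠ 0 ∧ c ≠ 0 ∧ a ≠ b ∧ a ≠ c ∧ b ≠ c ∧
        a + b + c = 0 ∧ a ^ 3 + b ^ 3 + c ^ 3 = 0) ∧
    (SimpleGraph.fromRel (fun x y : GaloisField 2 h × GaloisField 2 h =>
        ∃ a : GaloisField 2 h, a ≠ 0 ∧ x - y = (a, a ^ 3))).CliqueFree 3 := by
  refine ⟨no_sol h, ?_⟩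
  classical
  intro t ht
  obtain ⟨x, y, z, hxy, hxz, hyz, rfl⟩ := Finset.card_eq_three.1 ht.card_eq
  have htwo : (2 : GaloisField 2 h) = 0 := by
    simpa using CharP.cast_eq_zero (GaloisField 2 h) 2
  have adj : ∀ u v : (GaloisField 2 h) × (GaloisField 2 h),
      (SimpleGraph.fromRel (fun x y : (GaloisField 2 h) × (GaloisField 2 h) =>
        ∃ a : GaloisField 2 h, a ≠ 0 ∧ x - y = (a, a ^ 3))).Adj u v →
      ∃ a : GaloisField 2 h, a ≠ 0 ∧ u - v = (a, a ^ 3) := by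
    intro u v huv
    rw [SimpleGraph.fromRel_adj] at huv
    rcases huv.2 with ⟨a, ha, hd⟩ | ⟨a, ha, hd⟩
    · exact ⟨a, ha, hd⟩
    · refine ⟨a, ha, ?_⟩
      have : u - v = -(v - u) := by ring
      rw [this, CharTwo.neg_eq, hd]
  have hc1 := ht.1 (by simp) (by simp) hxy
  have hc2 := ht.1 (by simp) (by simp) hyz
  have hc3 := ht.1 (by simp) (by simp) hxz
  obtain ⟨a, ha, hda⟩ := adj x y hc1
  obtain ⟨b, hb, hdb⟩ := adj y z hc2
  obtain ⟨c, hcc, hdc⟩ := adj x z hc3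
  have hkey : x - y + (y - z) = x - z := by ring
  rw [hda, hdb, hdc, Prod.mk_add_mk, Prod.mk.injEq] at hkey
  obtain ⟨hs1, hs2⟩ := hkey
  refine no_sol h ⟨a, b, c, ha, hb, hcc, ?_, ?_, ?_, ?_, ?_⟩
  · rintro rfl
    exact hcc (by linear_combination -hs1 + a * htwo)
  · rintro rfl
    exact hb (by linear_combination hs1)
  · rintro rfl
    exact ha (by linear_combination hs1)
  · linear_combination hs1 + c * htwo
  · linear_combination hs2 + c ^ 3 * htwo
end

section
/- Let n ≥ 3, let M be a hyperplane (codimension-1 subspace) of the projective space PG(n−1, 2), W a codimension-2 subspace contained in M, P a point of M \ W, and ℓ a line with ℓ ∩ M = {P}. Then the set S = ((M \ W) ∪ ℓ) \ {P} is a cap of PG(n−1,2), i.e., no three points of S are collinear; equivalently, viewing points as nonzero vectors of F₂ⁿ, no three distinct elements of S sum to zero. -/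
open Module Submodule

lemma zmod2_cases : ∀ c : ZMod 2, c = 0 ∨ c = 1 := by decide

lemma char2_add_self {V : Type*} [AddCommGroup V] [Module (ZMod 2) V] (x : V) :
    x + x = 0 := by
  have h : x + x = (2 : ZMod 2) • x := by rw [two_smul]
  rw [h, show (2 : ZMod 2) = 0 by decide, zero_smul]

lemma aux_step {V : Type*} [AddCommGroup V] [Module (ZMod 2) V] [FiniteDimensional (ZMod 2) V]
    (A B : Submodule (ZMod 2) V) (hAB : A ≤ B) (x : V) (hxB : x ∈ B) (hxA : x ∉ A)
    (hr : finrank (ZMod 2) B = finrank (ZMod 2) A + 1) :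
    ∀ v ∈ B, v ∉ A → x + v ∈ A := by
  have hx0 : x ≠ 0 := fun h => hxA (h ▸ A.zero_mem)
  have hinf : (span (ZMod 2) {x}) ⊓ A = ⊥ := by
    rw [eq_bot_iff]
    intro y hy
    rw [Submodule.mem_inf] at hy
    obtain ⟨hy1, hy2⟩ := hy
    rw [mem_span_singleton] at hy1
    obtain ⟨c, rfl⟩ := hy1
    rcases zmod2_cases c with rfl | rfl
    · simp
    · rw [one_smul] at hy2; exact absurd hy2 hxA
  have hsup : span (ZMod 2) {x} ⊔ A = B := by
    apply Submodule.eq_of_le_of_finrank_eq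
    · exact sup_le ((span_singleton_le_iff_mem x B).mpr hxB) hAB
    · have h1 := Submodule.finrank_sup_add_finrank_inf_eq (span (ZMod 2) {x}) A
      rw [hinf, finrank_bot, finrank_span_singleton hx0] at h1
      omega
  intro v hvB hvA
  rw [← hsup] at hvB
  rw [Submodule.mem_sup] at hvB
  obtain ⟨y, hy, z, hz, rfl⟩ := hvB
  rw [mem_span_singleton] at hy
  obtain ⟨c, rfl⟩ := hy
  rcases zmod2_cases c with rfl | rfl
  · rw [zero_smul, zero_add] at hvA; exact absurd hz hvA
  · rw [one_smul, ← add_assoc, char2_add_self, zero_add]; exact hz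

theorem stmt6 (n : ℕ) (hn : 3 ≤ n)
    (M W L : Submodule (ZMod 2) (Fin n → ZMod 2))
    (hM : Module.finrank (ZMod 2) M = n - 1)
    (hWM : W ≤ M) (hW : Module.finrank (ZMod 2) W = n - 2)
    (P : Fin n → ZMod 2) (hP : P ∈ M) (hPW : P ∉ W)
    (hL : Module.finrank (ZMod 2) L = 2)
    (hLM : L ⊓ M = Submodule.span (ZMod 2) {P}) :
    ∀ u ∈ (((M : Set (Fin n → ZMod 2)) \ (W : Set (Fin n → ZMod 2))) ∪
        ((L : Set (Fin n → ZMod 2)) \ {0})) \ {P},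
      ∀ v ∈ (((M : Set (Fin n → ZMod 2)) \ (W : Set (Fin n → ZMod 2))) ∪
        ((L : Set (Fin n → ZMod 2)) \ {0})) \ {P},
      ∀ w ∈ (((M : Set (Fin n → ZMod 2)) \ (W : Set (Fin n → ZMod 2))) ∪
        ((L : Set (Fin n → ZMod 2)) \ {0})) \ {P},
      u ≠ v → u ≠ w → v ≠ w → u + v + w ≠ 0 := by
  have hP0 : P ≠ 0 := fun h => hPW (h ▸ W.zero_mem)
  have hPL : P ∈ L := by
    have : P ∈ L ⊓ M := hLM ▸ mem_span_singleton_self P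
    exact this.1
  have hsP : span (ZMod 2) {P} ≤ L := (span_singleton_le_iff_mem P L).mpr hPL
  have hsPM : span (ZMod 2) {P} ≤ M := (span_singleton_le_iff_mem P M).mpr hP
  -- "type B" elements are not in M
  have hBnotM : ∀ x : Fin n → ZMod 2, x ∈ L → x ≠ 0 → x ≠ P → x ∉ (M : Set _) := by
    intro x hxL hx0 hxP hxM
    have : x ∈ span (ZMod 2) {P} := hLM ▸ (mem_inf.mpr ⟨hxL, hxM⟩)
    rw [mem_span_singleton] at this
    obtain ⟨c, rfl⟩ := this
    rcases zmod2_cases c with rfl | rfl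
    · exact hx0 (zero_smul _ P)
    · exact hxP (one_smul _ P)
  -- two type-A elements sum into W
  have hAA : ∀ x y : Fin n → ZMod 2, x ∈ M → x ∉ W → y ∈ M → y ∉ W → x + y ∈ W := by
    intro x y hxM hxW hyM hyW
    exact aux_step W M hWM x hxM hxW (by omega) y hyM hyW
  -- two distinct type-B elements sum to P
  have hBB : ∀ x y : Fin n → ZMod 2, x ∈ L → x ∉ (M : Set _) → y ∈ L → y ∉ (M : Set _) →
      x ≠ y → x + y = P := by
    intro x y hxL hxM hyL hyM hxy
    have hxs : x ∉ span (ZMod 2) {P} := fun h => hxM (hsPM h)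
    have hys : y ∉ span (ZMod 2) {P} := fun h => hyM (hsPM h)
    have h1 : x + y ∈ span (ZMod 2) {P} := by
      apply aux_step (span (ZMod 2) {P}) L hsP x hxL hxs _ y hyL hys
      rw [hL, finrank_span_singleton hP0]
    rw [mem_span_singleton] at h1
    obtain ⟨c, hc⟩ := h1
    rcases zmod2_cases c with rfl | rfl
    · rw [zero_smul] at hc
      exfalso
      apply hxy
      have := congrArg (· + y) hc.symm
      simpa [add_assoc, char2_add_self] using this
    · rw [one_smul] at hc; exact hc.symm
  rintro u ⟨hu, huP⟩ v ⟨hv, hvP⟩ w ⟨hw, hwP⟩ huv huw hvw heq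
  simp only [Set.mem_singleton_iff] at huP hvP hwP
  -- from heq, each element is the sum of the other two
  have hw' : u + v = w := by
    have : u + v + (w + w) = w := by rw [← add_assoc, heq, zero_add]
    rwa [char2_add_self, add_zero] at this
  have hv' : u + w = v := by
    have : (u + v + w) + v = v := by rw [heq, zero_add]
    calc u + w = u + v + w + v := by abel_nf; rw [show (2:ℤ) • v = v + v by abel, char2_add_self]; abel
    _ = v := this
  have hu' : v + w = u := by
    have : (u + v + w) + u = u := by rw [heq, zero_add]
    calc v + w = u + v + w + u := by abel_nf; rw [show (2:ℤ) • u = u + u by abel, char2_add_self]; abel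
    _ = u := this
  -- classify each point
  rcases hu with ⟨huM, huW⟩ | ⟨huL, hu0⟩ <;>
    rcases hv with ⟨hvM, hvW⟩ | ⟨hvL, hv0⟩
  · -- u, v type A
    have hsum : u + v ∈ W := hAA u v huM huW hvM hvW
    rcases hw with ⟨hwM, hwW⟩ | ⟨hwL, hw0⟩
    · exact hwW (hw' ▸ hsum)
    · exact hBnotM w hwL (by simpa using hw0) hwP (hw' ▸ hWM hsum)
  · -- u type A, v type B
    have hvM : v ∉ (M : Set _) := hBnotM v hvL (by simpa using hv0) hvP
    rcases hw with ⟨hwM, hwW⟩ | ⟨hwL, hw0⟩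
    · exact hvM (hv' ▸ hWM (hAA u w huM huW hwM hwW))
    · have hwM : w ∉ (M : Set _) := hBnotM w hwL (by simpa using hw0) hwP
      exact huP (hu'.symm.trans (hBB v w hvL hvM hwL hwM hvw))
  · -- u type B, v type A
    have huM : u ∉ (M : Set _) := hBnotM u huL (by simpa using hu0) huP
    rcases hw with ⟨hwM, hwW⟩ | ⟨hwL, hw0⟩
    · exact huM (hu' ▸ hWM (hAA v w hvM hvW hwM hwW))
    · have hwM : w ∉ (M : Set _) := hBnotM w hwL (by simpa using hw0) hwP
      exact hvP (hv'.symm.trans (hBB u w huL huM hwL hwM huw))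
  · -- u, v type B
    have huM : u ∉ (M : Set _) := hBnotM u huL (by simpa using hu0) huP
    have hvM : v ∉ (M : Set _) := hBnotM v hvL (by simpa using hv0) hvP
    exact hwP (hw'.symm.trans (hBB u v huL huM hvL hvM huv))
end

section
/- A set F of subsets of {1,…,t} is an Oddtown family if every member has odd cardinality and every pair of distinct members has even-cardinality intersection. Every Oddtown family on a t-element ground set has at most t members. -/
theorem stmt9 (t : ℕ) (F : Finset (Finset (Fin t)))
    (hodd : ∀ S ∈ F, Odd S.card)
    (heven : ∀ S ∈ F, ∀ T ∈ F, S ≠ T → Even (S ∩ T).card) :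
    F.card ≤ t := by
  classical
  set v : F → (Fin t → ZMod 2) := fun S i => if i ∈ (S : Finset (Fin t)) then 1 else 0 with hv
  have dot : ∀ S T : F, ∑ i, v S i * v T i = ((S : Finset (Fin t)) ∩ T).card := by
    intro S T
    simp only [hv]
    have : ∀ x : Fin t, ((if x ∈ (S:Finset (Fin t)) then (1:ZMod 2) else 0) * if x ∈ (T:Finset (Fin t)) then 1 else 0) = if x ∈ (S:Finset (Fin t)) ∩ T then 1 else 0 := by
      intro x; by_cases h1 : x ∈ (S:Finset (Fin t)) <;> by_cases h2 : x ∈ (T:Finset (Fin t)) <;> simp [h1, h2]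
    rw [Finset.sum_congr rfl fun x _ => this x, Finset.sum_ite_mem, Finset.univ_inter,
      Finset.sum_const, nsmul_eq_mul, mul_one]
  have cast_even : ∀ n : ℕ, Even n → (n : ZMod 2) = 0 := fun n hn =>
    (ZMod.natCast_eq_zero_iff n 2).2 hn.two_dvd
  have cast_odd : ∀ n : ℕ, Odd n → (n : ZMod 2) = 1 := by
    intro n hn
    rw [← ZMod.natCast_mod, Nat.odd_iff.1 hn, Nat.cast_one]
  have li : LinearIndependent (ZMod 2) v := by
    rw [Fintype.linearIndependent_iff]
    intro g hg T
    have h1 : ∀ i, ∑ s : F, g s * v s i = 0 := by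
      intro i
      have := congrFun hg i
      simpa [Finset.sum_apply, smul_eq_mul] using this
    have h0 : ∑ s : F, g s * ∑ i, v s i * v T i = 0 := by
      calc ∑ s : F, g s * ∑ i, v s i * v T i
          = ∑ i, (∑ s : F, g s * v s i) * v T i := by
            simp_rw [Finset.mul_sum, Finset.sum_mul, mul_assoc]
            rw [Finset.sum_comm]
        _ = 0 := Finset.sum_eq_zero fun i _ => by
            rw [h1, zero_mul]
    simp_rw [dot] at h0
    rw [Finset.sum_eq_single T (fun s _ hs => by
        rw [cast_even _ (heven s s.2 T T.2 (fun h => hs (Subtype.ext h))), mul_zero])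
      (fun h => absurd (Finset.mem_univ T) h)] at h0
    rwa [Finset.inter_self, cast_odd _ (hodd T T.2), mul_one] at h0
  have := li.fintype_card_le_finrank
  rwa [Module.finrank_fintype_fun_eq_card, Fintype.card_fin, Fintype.card_coe] at this
end

section
/- For n = 5, the Cayley graph Γ of F₂⁵ (restricted as described to the cap S with |S| = 9) has spectrum 9^(1), 5^(1), 1^(21), (−3)^(7), (−7)^(2); in particular the rank of A_Γ − I over ℚ equals 32 − 21 = 11, and hence rank over F₂ of A_Γ + I is at most 11. -/
/-!
The characters `x ↦ (-1) ^ (a ⬝ᵥ x)` of `F₂⁵` form a common eigenbasis of every Cayley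
adjacency matrix, the eigenvalue at `a` being the character sum `∑_{s ∈ S} (-1) ^ (a ⬝ᵥ s)`.
The subspaces `W ≤ M` and `L` admit a common adapted basis `w₀, w₁, w₂, P, v`, so in these
coordinates `S` becomes the fixed set `{(c, 1, 0) : c ≠ 0} ∪ {(0,0,0,0,1), (0,0,0,1,1)}`, whose
character sums are computed directly. Over `F₂` one uses that a nonzero `k × k` minor mod 2 of an
integer matrix is also nonzero over `ℚ`, and `A_Γ - I ≡ A_Γ + I mod 2`.
-/

open Matrix Polynomial

/-- Adjacency matrix over `F` of the Cayley graph of `F₂⁵` with connection set `S`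
(in characteristic 2, `x - y = x + y`). -/
def cayAdj (F : Type*) [Zero F] [One F] (S : Finset (Fin 5 → ZMod 2)) :
    Matrix (Fin 5 → ZMod 2) (Fin 5 → ZMod 2) F :=
  Matrix.of fun x y => if x + y ∈ S then 1 else 0

open Module

section Walsh

def walsh (R : Type*) [Ring R] {n : ℕ} (a x : Fin n → ZMod 2) : R := (-1) ^ (a ⬝ᵥ x).val

def walshMatrix (R : Type*) [Ring R] (n : ℕ) : Matrix (Fin n → ZMod 2) (Fin n → ZMod 2) R :=
  of (walsh R)

variable {R : Type*} [Ring R] {n : ℕ}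

theorem neg_one_pow_val_add (u v : ZMod 2) :
    (-1 : R) ^ (u + v).val = (-1) ^ u.val * (-1) ^ v.val := by
  rw [ZMod.val_add, ← neg_one_pow_eq_pow_mod_two, pow_add]

theorem walsh_comm (a x : Fin n → ZMod 2) : walsh R a x = walsh R x a := by
  rw [walsh, walsh, dotProduct_comm]

theorem walsh_add_left (a b x : Fin n → ZMod 2) :
    walsh R (a + b) x = walsh R a x * walsh R b x := by
  rw [walsh, add_dotProduct, neg_one_pow_val_add, walsh, walsh]

theorem walsh_add_right (a x y : Fin n → ZMod 2) :
    walsh R a (x + y) = walsh R a x * walsh R a y := by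
  simp only [walsh_comm a, walsh_add_left]

theorem walsh_zero_left (x : Fin n → ZMod 2) : walsh R 0 x = 1 := by
  simp [walsh]

theorem sum_walsh_eq_zero {a : Fin n → ZMod 2} (ha : a ≠ 0) : ∑ x, walsh R a x = 0 := by
  obtain ⟨i, hi⟩ := Function.ne_iff.mp ha
  have hai : a i = 1 := by
    rw [Pi.zero_apply] at hi
    generalize a i = u at hi
    revert u
    decide
  have hsingle : walsh R a (Pi.single i 1) = -1 := by
    rw [walsh, dotProduct_single, mul_one, hai]
    exact pow_one _
  have hflip : ∀ x, walsh R a (x + Pi.single i 1) = -walsh R a x := fun x => by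
    rw [walsh_add_right, hsingle, mul_neg_one]
  refine Finset.sum_involution (fun x _ => x + Pi.single i 1)
    (fun x _ => by rw [hflip, add_neg_cancel]) (fun x _ _ h => ?_) (fun _ _ => Finset.mem_univ _)
    (fun x _ => by rw [add_assoc, ZModModule.add_self, add_zero])
  simpa using congrFun h i

theorem walshMatrix_mul_self : walshMatrix R n * walshMatrix R n = (2 ^ n : R) • 1 := by
  ext a b
  simp only [walshMatrix, mul_apply, of_apply, walsh_comm _ b, ← walsh_add_left,
    Matrix.smul_apply, one_apply]
  by_cases hab : a = b
  · simp [hab, ZModModule.add_self, walsh_zero_left]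
  · rw [sum_walsh_eq_zero (by rwa [← ZModModule.sub_eq_add, sub_ne_zero]), if_neg hab, smul_zero]

theorem walshMatrix_mul_inv {K : Type*} [Field K] [NeZero (2 : K)] :
    walshMatrix K n * ((2 ^ n : K)⁻¹ • walshMatrix K n) = 1 := by
  rw [mul_smul_comm, walshMatrix_mul_self, smul_smul, inv_mul_cancel₀ (pow_ne_zero _ two_ne_zero),
    one_smul]

theorem walshMatrix_inv_mul {K : Type*} [Field K] [NeZero (2 : K)] :
    ((2 ^ n : K)⁻¹ • walshMatrix K n) * walshMatrix K n = 1 := by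
  rw [smul_mul_assoc, walshMatrix_mul_self, smul_smul, inv_mul_cancel₀ (pow_ne_zero _ two_ne_zero),
    one_smul]

end Walsh

section CayleySpectrum

def cayEigenvalue (R : Type*) [Ring R] (S : Finset (Fin 5 → ZMod 2)) (a : Fin 5 → ZMod 2) : R :=
  ∑ s ∈ S, walsh R a s

variable {R : Type*} [Ring R] (S : Finset (Fin 5 → ZMod 2))

theorem cayAdj_mul_walshMatrix :
    cayAdj R S * walshMatrix R 5 = walshMatrix R 5 * diagonal (cayEigenvalue R S) := by
  ext x a
  rw [mul_diagonal, mul_apply, ← Equiv.sum_comp (Equiv.addLeft x)]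
  simp only [cayAdj, walshMatrix, of_apply, Equiv.coe_addLeft, ← add_assoc, ZModModule.add_self,
    zero_add, ite_mul, one_mul, zero_mul, Finset.sum_ite_mem, Finset.univ_inter, walsh_add_right,
    cayEigenvalue, Finset.mul_sum, walsh_comm _ a]

theorem intCast_cayEigenvalue (a : Fin 5 → ZMod 2) :
    ((cayEigenvalue ℤ S a : ℤ) : R) = cayEigenvalue R S a := by
  simp [cayEigenvalue, walsh]

theorem cayAdj_map {R' : Type*} [Ring R'] (f : R →+* R') :
    (cayAdj R S).map f = cayAdj R' S := by
  ext x y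
  simp [cayAdj, apply_ite f]

variable {K : Type*} [Field K] [NeZero (2 : K)]

theorem cayAdj_eq_walsh_conj :
    cayAdj K S =
      walshMatrix K 5 * diagonal (cayEigenvalue K S) * ((2 ^ 5 : K)⁻¹ • walshMatrix K 5) := by
  rw [← cayAdj_mul_walshMatrix, mul_assoc, walshMatrix_mul_inv, mul_one]

theorem charpoly_cayAdj : (cayAdj K S).charpoly = ∏ a, (X - C (cayEigenvalue K S a)) := by
  rw [cayAdj_eq_walsh_conj, charpoly_mul_comm, ← mul_assoc, walshMatrix_inv_mul, one_mul,
    charpoly_diagonal]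

theorem rank_cayAdj_sub_one [DecidableEq K] :
    (cayAdj K S - 1).rank = Fintype.card {a // cayEigenvalue K S a ≠ 1} := by
  have hconj : cayAdj K S - 1 = walshMatrix K 5 * diagonal (fun a => cayEigenvalue K S a - 1) *
      ((2 ^ 5 : K)⁻¹ • walshMatrix K 5) := by
    rw [← diagonal_sub, diagonal_one, Matrix.mul_sub, Matrix.sub_mul, mul_one, walshMatrix_mul_inv,
      ← cayAdj_eq_walsh_conj]
  rw [hconj, rank_mul_eq_left_of_isUnit_det _ _ (isUnit_det_of_left_inverse walshMatrix_mul_inv),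
    rank_mul_eq_right_of_isUnit_det _ _ (isUnit_det_of_right_inverse walshMatrix_mul_inv),
    rank_diagonal]
  simp [sub_eq_zero]

end CayleySpectrum

namespace Matrix

variable {m n K : Type*} [Fintype m] [Fintype n] [Field K]

theorem exists_submatrix_det_ne_zero (B : Matrix m n K) :
    ∃ (a : Fin B.rank → m) (c : Fin B.rank → n), (B.submatrix a c).det ≠ 0 := by
  classical
  obtain ⟨κ, a, ha, hspan_a, hind_a⟩ := exists_linearIndependent' K B.row
  have : Fintype κ := Fintype.ofInjective a ha
  obtain ⟨ι, c, hc, hspan_c, hind_c⟩ := exists_linearIndependent' K (B.submatrix a id).col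
  have : Fintype ι := Fintype.ofInjective c hc
  have hκ : Fintype.card κ = B.rank := by
    rw [rank_eq_finrank_span_row, ← hspan_a, finrank_span_eq_card hind_a]
  have hι : Fintype.card ι = B.rank := by
    rw [← finrank_span_eq_card hind_c, hspan_c, ← rank_eq_finrank_span_cols,
      LinearIndependent.rank_matrix (M := B.submatrix a id) hind_a, hκ]
  let eκ : Fin B.rank ≃ κ := (Fintype.equivFinOfCardEq hκ).symm
  let eι : Fin B.rank ≃ ι := (Fintype.equivFinOfCardEq hι).symm
  refine ⟨a ∘ eκ, c ∘ eι, ?_⟩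
  have hcols : LinearIndependent K (B.submatrix (a ∘ eκ) (c ∘ eι)).col :=
    (hind_c.comp eι eι.injective).map' (LinearEquiv.funCongrLeft K K eκ).toLinearMap
      (LinearEquiv.ker _)
  exact ((isUnit_iff_isUnit_det _).mp (linearIndependent_cols_iff_isUnit.mp hcols)).ne_zero

theorem rank_map_le_rank_map {R L : Type*} [CommRing R] [Field L] (φ : R →+* K) {ψ : R →+* L}
    (hψ : Function.Injective ψ) (A : Matrix m n R) : (A.map φ).rank ≤ (A.map ψ).rank := by
  obtain ⟨a, c, hdet⟩ := exists_submatrix_det_ne_zero (A.map φ)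
  have hdetA : (A.submatrix a c).det ≠ 0 := fun h => hdet <| by
    rw [submatrix_map, ← RingHom.mapMatrix_apply, ← RingHom.map_det, h, map_zero]
  have hdetψ : ((A.map ψ).submatrix a c).det ≠ 0 := by
    rw [submatrix_map, ← RingHom.mapMatrix_apply, ← RingHom.map_det]
    exact (map_ne_zero_iff ψ hψ).mpr hdetA
  calc (A.map φ).rank = ((A.map ψ).submatrix a c).rank := by
        rw [rank_of_det_ne_zero hdetψ, Fintype.card_fin]
    _ ≤ (A.map ψ).rank := rank_submatrix_le _ _ _

end Matrix

section Flag

variable {K V : Type*} [Field K] [AddCommGroup V] [Module K V] [FiniteDimensional K V]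

theorem Submodule.sup_span_singleton_eq_of_finrank_eq {N M : Submodule K V} (hNM : N ≤ M)
    (hfin : finrank K M = finrank K N + 1) {x : V} (hxM : x ∈ M) (hxN : x ∉ N) :
    N ⊔ Submodule.span K {x} = M := by
  refine Submodule.eq_of_le_of_finrank_le
    (sup_le hNM ((Submodule.span_singleton_le_iff_mem _ _).mpr hxM)) ?_
  have hlt : N < N ⊔ Submodule.span K {x} :=
    lt_of_le_of_ne le_sup_left fun h =>
      hxN (h ▸ Submodule.mem_sup_right (Submodule.mem_span_singleton_self x))
  have := Submodule.finrank_lt_finrank_of_lt hlt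
  omega

theorem exists_basis_adapted (hV : finrank K V = 5) {M W L : Submodule K V}
    (hM : finrank K M = 4) (hWM : W ≤ M) (hW : finrank K W = 3) {P : V} (hP : P ∈ M)
    (hPW : P ∉ W) (hL : finrank K L = 2) (hLM : L ⊓ M = Submodule.span K {P}) :
    ∃ b : Basis (Fin 5) K V,
      W = Submodule.span K (b '' ↑({0, 1, 2} : Finset (Fin 5))) ∧
      M = Submodule.span K (b '' ↑({0, 1, 2, 3} : Finset (Fin 5))) ∧
      L = Submodule.span K (b '' ↑({3, 4} : Finset (Fin 5))) ∧ b 3 = P := by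
  have hP0 : P ≠ 0 := fun h => hPW (h ▸ W.zero_mem)
  have hPL : P ∈ L := (hLM.ge (Submodule.mem_span_singleton_self P)).1
  obtain ⟨v, hvL, hvM⟩ : ∃ v ∈ L, v ∉ M := by
    by_contra! hLle
    rw [inf_eq_left.mpr hLle] at hLM
    rw [hLM, finrank_span_singleton hP0] at hL
    omega
  have hPM : Submodule.span K {P} ≤ M := (Submodule.span_singleton_le_iff_mem _ _).mpr hP
  have hMeq : W ⊔ Submodule.span K {P} = M :=
    Submodule.sup_span_singleton_eq_of_finrank_eq hWM (by rw [hM, hW]) hP hPW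
  have hTop : M ⊔ Submodule.span K {v} = ⊤ :=
    Submodule.sup_span_singleton_eq_of_finrank_eq le_top (by rw [finrank_top, hV, hM]) trivial hvM
  have hLeq : Submodule.span K {P} ⊔ Submodule.span K {v} = L :=
    Submodule.sup_span_singleton_eq_of_finrank_eq
      ((Submodule.span_singleton_le_iff_mem _ _).mpr hPL) (by rw [hL, finrank_span_singleton hP0])
      hvL fun h => hvM (hPM h)
  let w := Module.finBasisOfFinrankEq K W hW
  have hWspan : W = Submodule.span K ({(w 0 : V), (w 1 : V), (w 2 : V)} : Set V) := by
    have hrange : ({(w 0 : V), (w 1 : V), (w 2 : V)} : Set V) = W.subtype '' Set.range w := by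
      ext; simp [Fin.exists_fin_succ, eq_comm]
    rw [hrange, ← Submodule.map_span, w.span_eq, Submodule.map_subtype_top]
  have hMspan : M = Submodule.span K ({(w 0 : V), (w 1 : V), (w 2 : V), P} : Set V) := by
    rw [show ({(w 0 : V), (w 1 : V), (w 2 : V), P} : Set V) =
        {(w 0 : V), (w 1 : V), (w 2 : V)} ∪ {P} by ext; simp; tauto,
      Submodule.span_union, ← hWspan, hMeq]
  let b₀ : Fin 5 → V := ![w 0, w 1, w 2, P, v]
  have hspan : ⊤ ≤ Submodule.span K (Set.range b₀) := by
    rw [← hTop, hMspan, ← Submodule.span_union]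
    refine Submodule.span_mono ?_
    simp [Set.insert_subset_iff, b₀]
  let b := basisOfTopLeSpanOfCardEqFinrank b₀ hspan (by rw [Fintype.card_fin, hV])
  have hb : ⇑b = b₀ := coe_basisOfTopLeSpanOfCardEqFinrank _ _ _
  refine ⟨b, ?_, ?_, ?_, ?_⟩ <;>
    simp only [hb, b₀, Finset.coe_insert, Finset.coe_singleton, Set.image_insert_eq,
      Set.image_singleton, Matrix.cons_val]
  · exact hWspan
  · exact hMspan
  · rw [← hLeq, Submodule.span_insert]

end Flag

section CapSet

def capSet {R V : Type*} [Ring R] [AddCommGroup V] [Module R V] (M W L : Submodule R V) (P : V) :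
    Set V :=
  (((M : Set V) \ W) ∪ ((L : Set V) \ {0})) \ {P}

/-- `capSet M W L P` read in the coordinates of the basis `w₀, w₁, w₂, P, v` given by
`exists_basis_adapted`. -/
def capCoords : Finset (Fin 5 → ZMod 2) :=
  {c | (c 3 = 1 ∧ c 4 = 0 ∧ ¬(c 0 = 0 ∧ c 1 = 0 ∧ c 2 = 0)) ∨
    (c 0 = 0 ∧ c 1 = 0 ∧ c 2 = 0 ∧ c 4 = 1)}

theorem mem_capSet_span_iff {V : Type*} [AddCommGroup V] [Module (ZMod 2) V]
    (b : Basis (Fin 5) (ZMod 2) V) (z : V) :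
    z ∈ capSet (Submodule.span (ZMod 2) (b '' ↑({0, 1, 2, 3} : Finset (Fin 5))))
        (Submodule.span (ZMod 2) (b '' ↑({0, 1, 2} : Finset (Fin 5))))
        (Submodule.span (ZMod 2) (b '' ↑({3, 4} : Finset (Fin 5)))) (b 3) ↔
      b.equivFun z ∈ capCoords := by
  have hb3 : b.equivFun (b 3) = Pi.single 3 1 := by
    ext i
    simp [b.equivFun_self, Pi.single_apply, eq_comm]
  have h3 : z = b 3 ↔ b.equivFun z = Pi.single 3 1 := by
    rw [← hb3, b.equivFun.injective.eq_iff]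
  have h0 : z = 0 ↔ b.equivFun z = 0 := b.equivFun.map_eq_zero_iff.symm
  simp only [capSet, Set.mem_sdiff, Set.mem_union, SetLike.mem_coe, Basis.mem_span_image,
    Finsupp.support_subset_iff, Set.mem_singleton_iff, h3, h0, ← b.equivFun_apply]
  generalize b.equivFun z = c
  revert c
  decide

theorem cayAdj_eq_reindex {R : Type*} [Zero R] [One R]
    (g : (Fin 5 → ZMod 2) ≃ₗ[ZMod 2] (Fin 5 → ZMod 2)) {S T : Finset (Fin 5 → ZMod 2)}
    (h : ∀ z, z ∈ S ↔ g z ∈ T) :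
    cayAdj R S = reindex g.toEquiv.symm g.toEquiv.symm (cayAdj R T) := by
  ext x y
  simp [cayAdj, h]

theorem map_cayEigenvalue_capCoords :
    Finset.univ.val.map (cayEigenvalue ℤ capCoords) =
      {9, 5} + Multiset.replicate 21 1 + Multiset.replicate 7 (-3) + Multiset.replicate 2 (-7) := by
  decide

theorem charpoly_cayAdj_capCoords : (cayAdj ℚ capCoords).charpoly =
    (X - C 9) * (X - C 5) * (X - C 1) ^ 21 * (X + C 3) ^ 7 * (X + C 7) ^ 2 := by
  rw [charpoly_cayAdj, Finset.prod_eq_multiset_prod]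
  calc (Finset.univ.val.map fun a => X - C (cayEigenvalue ℚ capCoords a)).prod
      = ((Finset.univ.val.map (cayEigenvalue ℤ capCoords)).map
          fun k : ℤ => X - C (k : ℚ)).prod := by
        simp only [Multiset.map_map, Function.comp_def, intCast_cayEigenvalue]
    _ = _ := by
        rw [map_cayEigenvalue_capCoords]
        simp only [Multiset.map_add, Multiset.prod_add, Multiset.map_replicate,
          Multiset.prod_replicate, Multiset.insert_eq_cons, Multiset.map_cons, Multiset.prod_cons,
          Multiset.map_singleton, Multiset.prod_singleton, Int.cast_neg, map_neg, sub_neg_eq_add]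
        push_cast
        ring

theorem rank_cayAdj_capCoords_sub_one : (cayAdj ℚ capCoords - 1).rank = 11 := by
  rw [rank_cayAdj_sub_one, Fintype.card_subtype]
  simp only [← intCast_cayEigenvalue (R := ℚ), ne_eq, Int.cast_eq_one]
  decide

end CapSet

theorem map_intCast_cayAdj_sub_one {R : Type*} [CommRing R] (S : Finset (Fin 5 → ZMod 2)) :
    (cayAdj ℤ S - 1).map (Int.castRingHom R) = cayAdj R S - 1 := by
  rw [← RingHom.mapMatrix_apply, map_sub, map_one, RingHom.mapMatrix_apply, cayAdj_map]

theorem rank_cayAdj_zmod_two_add_one_le (S : Finset (Fin 5 → ZMod 2)) :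
    (cayAdj (ZMod 2) S + 1).rank ≤ (cayAdj ℚ S - 1).rank := by
  have h := rank_map_le_rank_map (Int.castRingHom (ZMod 2)) (Int.castRingHom ℚ).injective_int
    (cayAdj ℤ S - 1)
  rwa [map_intCast_cayAdj_sub_one, map_intCast_cayAdj_sub_one, ZModModule.sub_eq_add] at h

theorem stmt12 (M W L : Submodule (ZMod 2) (Fin 5 → ZMod 2))
    (hM : Module.finrank (ZMod 2) M = 4)
    (hWM : W ≤ M) (hW : Module.finrank (ZMod 2) W = 3)
    (P : Fin 5 → ZMod 2) (hP : P ∈ M) (hPW : P ∉ W)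
    (hL : Module.finrank (ZMod 2) L = 2)
    (hLM : L ⊓ M = Submodule.span (ZMod 2) {P})
    (S : Finset (Fin 5 → ZMod 2))
    (hS : (S : Set (Fin 5 → ZMod 2)) =
      (((M : Set (Fin 5 → ZMod 2)) \ (W : Set (Fin 5 → ZMod 2))) ∪
        ((L : Set (Fin 5 → ZMod 2)) \ {0})) \ {P}) :
    (cayAdj ℚ S).charpoly =
      (X - C 9) * (X - C 5) * (X - C 1) ^ 21 * (X + C 3) ^ 7 * (X + C 7) ^ 2 ∧
    (cayAdj ℚ S - 1).rank = 11 ∧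
    (cayAdj (ZMod 2) S + 1).rank ≤ 11 := by
  obtain ⟨b, rfl, rfl, rfl, rfl⟩ := exists_basis_adapted (by simp) hM hWM hW hP hPW hL hLM
  let e := b.equivFun.toEquiv.symm
  have hA : cayAdj ℚ S = reindex e e (cayAdj ℚ capCoords) :=
    cayAdj_eq_reindex b.equivFun fun z => by
      rw [← Finset.mem_coe, hS]
      exact mem_capSet_span_iff b z
  have hrank : (cayAdj ℚ S - 1).rank = 11 := by
    have hsub : cayAdj ℚ S - 1 = reindex e e (cayAdj ℚ capCoords - 1) := by
      ext x y
      simp [hA, one_apply]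
    rw [hsub, rank_reindex, rank_cayAdj_capCoords_sub_one]
  refine ⟨?_, hrank, hrank ▸ rank_cayAdj_zmod_two_add_one_le S⟩
  rw [hA, charpoly_reindex, charpoly_cayAdj_capCoords]
end

section
/- Let Γ be a triangle-free k-regular graph on N vertices whose adjacency matrix has eigenvalue −1 with multiplicity μ. Then for every ℓ ≥ 1, the graph Δ = Γ ⊠ K_ℓ has clique number at most 2ℓ, and the multiplicity of eigenvalue −1 of A_Δ is at least (ℓ−1)·mult₁(A_Γ), where mult₁(A_Γ) is the multiplicity of eigenvalue 1 of A_Γ; hence rank_ℝ(A_Δ + I) ≤ ℓN − (ℓ−1)·mult₁(A_Γ). -/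
open Matrix

/-- The strong product of two simple graphs. -/
def strongProd {α β : Type*} (G : SimpleGraph α) (H : SimpleGraph β) :
    SimpleGraph (α × β) where
  Adj x y := x ≠ y ∧ (x.1 = y.1 ∨ G.Adj x.1 y.1) ∧ (x.2 = y.2 ∨ H.Adj x.2 y.2)
  symm := ⟨by
    rintro x y ⟨h1, h2, h3⟩
    exact ⟨h1.symm, h2.imp Eq.symm SimpleGraph.Adj.symm, h3.imp Eq.symm SimpleGraph.Adj.symm⟩⟩
  loopless := ⟨fun x h => h.1 rfl⟩

instance {α β : Type*} [DecidableEq α] [DecidableEq β]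
    (G : SimpleGraph α) (H : SimpleGraph β) [DecidableRel G.Adj] [DecidableRel H.Adj] :
    DecidableRel (strongProd G H).Adj := fun x y =>
  inferInstanceAs (Decidable (x ≠ y ∧ (x.1 = y.1 ∨ G.Adj x.1 y.1) ∧ (x.2 = y.2 ∨ H.Adj x.2 y.2)))

/-- Multiplicity of an eigenvalue `μ` of a square real matrix `A`, as the dimension
of the corresponding eigenspace. -/
noncomputable def eigMult {n : Type*} [Fintype n] [DecidableEq n]
    (A : Matrix n n ℝ) (μ : ℝ) : ℕ :=
  Module.finrank ℝ (Module.End.eigenspace (Matrix.toLin' A) μ)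

section aux
variable {V : Type*} [Fintype V] [DecidableEq V] (Γ : SimpleGraph V) [DecidableRel Γ.Adj]
  {ℓ : ℕ}

/-- The row-sum map. -/
def sumMap (V : Type*) [Fintype V] (ℓ : ℕ) : ((V × Fin ℓ) → ℝ) →ₗ[ℝ] (V → ℝ) where
  toFun f := fun v => ∑ j : Fin ℓ, f (v, j)
  map_add' f g := by funext v; simp [Finset.sum_add_distrib]
  map_smul' c f := by funext v; simp [Finset.mul_sum]

lemma adjMatrix_mulVec_eq_neg (f : (V × Fin ℓ) → ℝ) (hf : ∀ v, ∑ j : Fin ℓ, f (v, j) = 0) :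
    ((strongProd Γ (⊤ : SimpleGraph (Fin ℓ))).adjMatrix ℝ).mulVec f = -f := by
  funext p
  obtain ⟨v, i⟩ := p
  simp only [mulVec, dotProduct, Pi.neg_apply]
  rw [Fintype.sum_prod_type]
  have hterm : ∀ u : V, (∑ j : Fin ℓ,
      ((strongProd Γ (⊤ : SimpleGraph (Fin ℓ))).adjMatrix ℝ) (v, i) (u, j) * f (u, j))
      = if u = v then -f (v, i) else 0 := by
    intro u
    by_cases huv : u = v
    · subst huv
      rw [if_pos rfl]
      have h1 : ∀ j : Fin ℓ,
          ((strongProd Γ (⊤ : SimpleGraph (Fin ℓ))).adjMatrix ℝ) (u, i) (u, j) * f (u, j)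
          = f (u, j) - (if j = i then f (u, i) else 0) := by
        intro j
        by_cases hj : j = i
        · subst hj
          have : ¬ (strongProd Γ (⊤ : SimpleGraph (Fin ℓ))).Adj (u, j) (u, j) :=
            (strongProd Γ _).loopless.irrefl _
          simp [SimpleGraph.adjMatrix_apply, this]
        · have : (strongProd Γ (⊤ : SimpleGraph (Fin ℓ))).Adj (u, i) (u, j) := by
            refine ⟨fun h => hj ((congrArg Prod.snd h).symm), Or.inl rfl, ?_⟩
            by_cases hij : i = j
            · exact Or.inl hij
            · exact Or.inr (by simpa [SimpleGraph.top_adj] using hij)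
          simp [SimpleGraph.adjMatrix_apply, this, if_neg hj]
      rw [Finset.sum_congr rfl (fun j _ => h1 j), Finset.sum_sub_distrib, hf u,
        Finset.sum_ite_eq' Finset.univ i (fun _ => f (u, i))]
      simp
    · rw [if_neg huv]
      by_cases hadj : Γ.Adj v u
      · have h1 : ∀ j : Fin ℓ,
            ((strongProd Γ (⊤ : SimpleGraph (Fin ℓ))).adjMatrix ℝ) (v, i) (u, j) * f (u, j)
            = f (u, j) := by
          intro j
          have : (strongProd Γ (⊤ : SimpleGraph (Fin ℓ))).Adj (v, i) (u, j) := by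
            refine ⟨?_, Or.inr hadj, ?_⟩
            · exact fun h => huv ((congrArg Prod.fst h).symm)
            · by_cases hij : i = j
              · exact Or.inl hij
              · exact Or.inr (by simpa [SimpleGraph.top_adj] using hij)
          simp [SimpleGraph.adjMatrix_apply, this]
        rw [Finset.sum_congr rfl (fun j _ => h1 j), hf u]
      · have h1 : ∀ j : Fin ℓ,
            ((strongProd Γ (⊤ : SimpleGraph (Fin ℓ))).adjMatrix ℝ) (v, i) (u, j) * f (u, j)
            = 0 := by
          intro j
          have : ¬ (strongProd Γ (⊤ : SimpleGraph (Fin ℓ))).Adj (v, i) (u, j) := by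
            rintro ⟨-, h2, -⟩
            rcases h2 with h2 | h2
            · exact huv h2.symm
            · exact hadj h2
          simp [SimpleGraph.adjMatrix_apply, this]
        rw [Finset.sum_congr rfl (fun j _ => h1 j), Finset.sum_const_zero]
  rw [Finset.sum_congr rfl (fun u _ => hterm u), Finset.sum_ite_eq' Finset.univ v
    (fun _ => -f (v, i))]
  simp

lemma ker_sumMap_finrank (hℓ : 1 ≤ ℓ) :
    Module.finrank ℝ (LinearMap.ker (sumMap V ℓ)) = Fintype.card V * ℓ - Fintype.card V := by
  have hsurj : Function.Surjective (sumMap V ℓ) := by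
    intro g
    refine ⟨fun p => if p.2 = (⟨0, hℓ⟩ : Fin ℓ) then g p.1 else 0, ?_⟩
    funext v
    simp [sumMap, Finset.sum_ite_eq' Finset.univ (⟨0, hℓ⟩ : Fin ℓ)]
  have hrange : LinearMap.range (sumMap V ℓ) = ⊤ := LinearMap.range_eq_top.mpr hsurj
  have := LinearMap.finrank_range_add_finrank_ker (sumMap V ℓ)
  rw [hrange, finrank_top, Module.finrank_fintype_fun_eq_card,
    Module.finrank_fintype_fun_eq_card, Fintype.card_prod, Fintype.card_fin] at this
  omega

end aux

theorem stmt15 {V : Type*} [Fintype V] [DecidableEq V] (Γ : SimpleGraph V)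
    [DecidableRel Γ.Adj] (k μ : ℕ) (htf : Γ.CliqueFree 3)
    (hreg : Γ.IsRegularOfDegree k)
    (hμ : eigMult (Γ.adjMatrix ℝ) (-1) = μ) (ℓ : ℕ) (hℓ : 1 ≤ ℓ) :
    (strongProd Γ (⊤ : SimpleGraph (Fin ℓ))).CliqueFree (2 * ℓ + 1) ∧
    (ℓ - 1) * eigMult (Γ.adjMatrix ℝ) 1 ≤
      eigMult ((strongProd Γ (⊤ : SimpleGraph (Fin ℓ))).adjMatrix ℝ) (-1) ∧
    ((strongProd Γ (⊤ : SimpleGraph (Fin ℓ))).adjMatrix ℝ + 1).rank ≤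
      ℓ * Fintype.card V - (ℓ - 1) * eigMult (Γ.adjMatrix ℝ) 1 := by
  set N := Fintype.card V
  -- multiplicity of 1 is at most N
  have hmult_le : eigMult (Γ.adjMatrix ℝ) 1 ≤ N := by
    have := Submodule.finrank_le (Module.End.eigenspace (Matrix.toLin' (Γ.adjMatrix ℝ)) 1)
    rwa [Module.finrank_fintype_fun_eq_card] at this
  -- kernel of sumMap is inside eigenspace of -1
  have hker_le : LinearMap.ker (sumMap V ℓ) ≤
      Module.End.eigenspace (Matrix.toLin'
        ((strongProd Γ (⊤ : SimpleGraph (Fin ℓ))).adjMatrix ℝ)) (-1) := by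
    intro f hf
    rw [Module.End.mem_eigenspace_iff, Matrix.toLin'_apply]
    have hf' : ∀ v, ∑ j : Fin ℓ, f (v, j) = 0 := fun v => congrFun (LinearMap.mem_ker.mp hf) v
    rw [adjMatrix_mulVec_eq_neg Γ f hf']
    simp
  have hker_rank := ker_sumMap_finrank (V := V) hℓ
  have hmono : Fintype.card V * ℓ - Fintype.card V ≤
      eigMult ((strongProd Γ (⊤ : SimpleGraph (Fin ℓ))).adjMatrix ℝ) (-1) := by
    rw [← hker_rank]
    exact Submodule.finrank_mono hker_le
  refine ⟨?_, ?_, ?_⟩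
  · -- clique-free
    intro s hs
    have hclique : Γ.IsClique (↑(s.image Prod.fst) : Set V) := by
      intro v hv u hu hvu
      simp only [Finset.coe_image, Set.mem_image, Finset.mem_coe] at hv hu
      obtain ⟨x, hx, rfl⟩ := hv
      obtain ⟨y, hy, rfl⟩ := hu
      have hxy : x ≠ y := fun h => hvu (by rw [h])
      have := hs.isClique hx hy hxy
      rcases this.2.1 with h | h
      · exact absurd h hvu
      · exact h
    have hcard2 : (s.image Prod.fst).card ≤ 2 := by
      by_contra h
      push_neg at h
      obtain ⟨t, hts, htc⟩ := Finset.exists_subset_card_eq (by omega : 3 ≤ (s.image Prod.fst).card)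
      exact htf t ⟨hclique.subset (by exact_mod_cast hts), htc⟩
    have hsub : s ⊆ (s.image Prod.fst) ×ˢ (Finset.univ : Finset (Fin ℓ)) := by
      intro x hx
      rw [Finset.mem_product]
      exact ⟨Finset.mem_image_of_mem _ hx, Finset.mem_univ _⟩
    have := Finset.card_le_card hsub
    rw [Finset.card_product, Finset.card_univ, Fintype.card_fin, hs.card_eq] at this
    have : 2 * ℓ + 1 ≤ 2 * ℓ := le_trans this (by
      exact Nat.mul_le_mul_right ℓ hcard2)
    omega
  · calc (ℓ - 1) * eigMult (Γ.adjMatrix ℝ) 1 ≤ (ℓ - 1) * N := Nat.mul_le_mul_left _ hmult_le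
      _ ≤ N * ℓ - N := by cases ℓ with
        | zero => omega
        | succ n => simp [Nat.succ_sub_one, Nat.mul_succ, Nat.mul_comm]
      _ ≤ _ := hmono
  · -- rank bound
    set A := (strongProd Γ (⊤ : SimpleGraph (Fin ℓ))).adjMatrix ℝ
    have hker_le' : LinearMap.ker (sumMap V ℓ) ≤ LinearMap.ker (A + 1).mulVecLin := by
      intro f hf
      rw [LinearMap.mem_ker, mulVecLin_apply, add_mulVec, one_mulVec]
      have hf' : ∀ v, ∑ j : Fin ℓ, f (v, j) = 0 := fun v => congrFun (LinearMap.mem_ker.mp hf) v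
      rw [adjMatrix_mulVec_eq_neg Γ f hf']
      simp
    have hRN := LinearMap.finrank_range_add_finrank_ker (A + 1).mulVecLin
    rw [Module.finrank_fintype_fun_eq_card, Fintype.card_prod, Fintype.card_fin] at hRN
    have hkk : Fintype.card V * ℓ - Fintype.card V ≤
        Module.finrank ℝ (LinearMap.ker (A + 1).mulVecLin) := by
      rw [← hker_rank]
      exact Submodule.finrank_mono hker_le'
    have hrank : (A + 1).rank = Module.finrank ℝ (LinearMap.range (A + 1).mulVecLin) := rfl
    have h1 : (A + 1).rank ≤ N := by omega
    have h2 : (ℓ - 1) * eigMult (Γ.adjMatrix ℝ) 1 ≤ (ℓ - 1) * N :=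
      Nat.mul_le_mul_left _ hmult_le
    have h3 : ℓ * N - (ℓ - 1) * N = N := by cases ℓ with
      | zero => omega
      | succ n => simp [Nat.succ_sub_one, Nat.succ_mul]
    omega
end

section
/- Let t ≥ 1 and let Γ be the graph whose vertices are the proper odd-cardinality subsets of {1,…,t} with two subsets adjacent iff they are distinct and their intersection has odd cardinality. Then the clique number of Γ is at most 2^{⌊(t−1)/2⌋}. -/
open Finset

section Aux

variable (t : ℕ)

/-- characteristic vector -/
def chv (S : Finset (Fin t)) : Fin t → ZMod 2 := fun i => if i ∈ S then 1 else 0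

/-- standard bilinear form -/
noncomputable def bl : (Fin t → ZMod 2) →ₗ[ZMod 2] (Fin t → ZMod 2) →ₗ[ZMod 2] ZMod 2 :=
  LinearMap.mk₂ (ZMod 2) (fun x y => ∑ i, x i * y i)
    (fun x x' y => by simp [add_mul, Finset.sum_add_distrib])
    (fun c x y => by simp [Finset.mul_sum, mul_assoc])
    (fun x y y' => by simp [mul_add, Finset.sum_add_distrib])
    (fun c x y => by
      simp only [smul_eq_mul, Finset.mul_sum, Pi.smul_apply]
      exact Finset.sum_congr rfl fun i _ => by ring)

lemma bl_chv (S T : Finset (Fin t)) :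
    bl t (chv t S) (chv t T) = ((S ∩ T).card : ZMod 2) := by
  classical
  simp only [bl, LinearMap.mk₂_apply, chv]
  rw [Finset.sum_congr rfl (g := fun i => if i ∈ S ∩ T then (1:ZMod 2) else 0)
    (fun i _ => by by_cases hS : i ∈ S <;> by_cases hT : i ∈ T <;> simp [hS, hT])]
  rw [Finset.sum_ite_mem, Finset.univ_inter, Finset.sum_const, nsmul_eq_mul, mul_one]

lemma bl_comm (x y : Fin t → ZMod 2) : bl t x y = bl t y x := by
  simp only [bl, LinearMap.mk₂_apply, mul_comm]

lemma bl_inj : Function.Injective (bl t) := by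
  intro x y h
  funext i
  have := congrArg (fun f => f (chv t {i})) h
  simpa [bl, chv, Finset.mul_sum, Finset.sum_ite_eq'] using this

end Aux

theorem stmt17 (t : ℕ) (ht : 1 ≤ t) (C : Finset (Finset (Fin t)))
    (hproper : ∀ S ∈ C, S ≠ Finset.univ ∧ Odd S.card)
    (hclique : ∀ S ∈ C, ∀ T ∈ C, S ≠ T → Odd (S ∩ T).card) :
    C.card ≤ 2 ^ ((t - 1) / 2) := by
  classical
  rcases C.eq_empty_or_nonempty with rfl | ⟨u₀, hu₀⟩
  · simp
  -- all pairwise (incl. self) intersections odd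
  have hodd : ∀ S ∈ C, ∀ T ∈ C, bl t (chv t S) (chv t T) = 1 := by
    intro S hS T hT
    rw [bl_chv]
    have hoddST : Odd ((S ∩ T).card) := by
      rcases eq_or_ne S T with rfl | hne
      · simpa using (hproper S hS).2
      · exact hclique S hS T hT hne
    obtain ⟨k, hk⟩ := hoddST
    rw [hk]
    push_cast
    rw [show ((2:ZMod 2)) = 0 by decide]
    ring
  set V := Fin t → ZMod 2
  set D : Finset V := C.image (fun S => chv t S + chv t u₀) with hD
  have hchv_inj : Function.Injective (chv t) := by
    intro S T h
    ext i
    have := congrFun h i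
    simp only [chv] at this
    by_cases hS : i ∈ S <;> by_cases hT : i ∈ T <;> simp_all
  have hDcard : D.card = C.card := by
    rw [hD, Finset.card_image_of_injective]
    intro S T h
    exact hchv_inj (by simpa using add_right_cancel h)
  set W : Submodule (ZMod 2) V := Submodule.span (ZMod 2) (D : Set V) with hW
  -- generators are pairwise isotropic
  have hgen : ∀ d ∈ (D : Set V), ∀ d' ∈ (D : Set V), bl t d d' = 0 := by
    rintro d hd d' hd'
    simp only [hD, Finset.coe_image, Set.mem_image, Finset.mem_coe] at hd hd'
    obtain ⟨S, hS, rfl⟩ := hd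
    obtain ⟨T, hT, rfl⟩ := hd'
    simp only [map_add, LinearMap.add_apply]
    rw [hodd S hS T hT, hodd S hS u₀ hu₀, hodd u₀ hu₀ T hT, hodd u₀ hu₀ u₀ hu₀]
    decide
  -- generators kill chv u₀ and the all-ones vector
  have hgenu : ∀ d ∈ (D : Set V), bl t d (chv t u₀) = 0 := by
    rintro d hd
    simp only [hD, Finset.coe_image, Set.mem_image, Finset.mem_coe] at hd
    obtain ⟨S, hS, rfl⟩ := hd
    simp only [map_add, LinearMap.add_apply]
    rw [hodd S hS u₀ hu₀, hodd u₀ hu₀ u₀ hu₀]; decide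
  have hgen1 : ∀ d ∈ (D : Set V), bl t d (chv t Finset.univ) = 0 := by
    rintro d hd
    simp only [hD, Finset.coe_image, Set.mem_image, Finset.mem_coe] at hd
    obtain ⟨S, hS, rfl⟩ := hd
    simp only [map_add, LinearMap.add_apply, bl_chv, Finset.inter_univ]
    obtain ⟨k, hk⟩ := (hproper S hS).2
    obtain ⟨m, hm⟩ := (hproper u₀ hu₀).2
    rw [hk, hm, show ((2*k+1 : ℕ) : ZMod 2) + ((2*m+1 : ℕ) : ZMod 2)
      = ((2:ℕ) : ZMod 2) * (k+m+1) by push_cast; ring, ZMod.natCast_self, zero_mul]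
  -- from generators to span, one fixed right argument
  have span_kill : ∀ (v : V), (∀ d ∈ (D : Set V), bl t d v = 0) →
      ∀ w ∈ W, bl t w v = 0 := by
    intro v hv w hw
    have : W ≤ LinearMap.ker ((bl t).flip v) := by
      rw [hW, Submodule.span_le]
      intro d hd
      simpa [LinearMap.mem_ker] using hv d hd
    simpa using this hw
  have hWu : ∀ w ∈ W, bl t w (chv t u₀) = 0 := span_kill _ hgenu
  have hW1 : ∀ w ∈ W, bl t w (chv t Finset.univ) = 0 := span_kill _ hgen1
  have hWW : ∀ w ∈ W, ∀ w' ∈ W, bl t w w' = 0 := by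
    intro w hw w' hw'
    have h1 : ∀ d ∈ (D : Set V), bl t w d = 0 := fun d hd =>
      span_kill d (fun d' hd' => hgen d' hd' d hd) w hw
    rw [bl_comm]
    exact span_kill w (fun d hd => by rw [bl_comm]; exact h1 d hd) w' hw'
  -- all-ones not in W
  have h1W : chv t Finset.univ ∉ W := by
    intro h
    have := hWu _ h
    rw [bl_chv, Finset.univ_inter] at this
    obtain ⟨m, hm⟩ := (hproper u₀ hu₀).2
    rw [hm] at this
    push_cast at this
    rw [show ((2:ZMod 2)) = 0 by decide] at this
    ring_nf at this
    exact one_ne_zero this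
  set X : Submodule (ZMod 2) V := W ⊔ Submodule.span (ZMod 2) {chv t Finset.univ} with hX
  have hWX : W < X := by
    refine lt_of_le_of_ne le_sup_left (fun h => h1W ?_)
    rw [h, hX]
    exact Submodule.mem_sup_right (Submodule.mem_span_singleton_self _)
  have hfin : Module.finrank (ZMod 2) W < Module.finrank (ZMod 2) X :=
    Submodule.finrank_lt_finrank_of_lt hWX
  -- W embeds into the dual annihilator of X
  have hinj : ∃ f : W →ₗ[ZMod 2] X.dualAnnihilator, Function.Injective f := by
    refine ⟨LinearMap.codRestrict _ ((bl t).comp W.subtype) ?_, ?_⟩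
    · intro w
      rw [Submodule.mem_dualAnnihilator]
      intro x hx
      rw [hX, Submodule.mem_sup] at hx
      obtain ⟨y, hy, z, hz, rfl⟩ := hx
      obtain ⟨c, rfl⟩ := Submodule.mem_span_singleton.mp hz
      simp only [LinearMap.comp_apply, Submodule.subtype_apply, map_add, map_smul,
        smul_eq_mul]
      rw [hWW _ w.2 y hy, hW1 _ w.2]
      ring
    · intro w w' h
      apply Subtype.ext
      apply bl_inj t
      have := congrArg (fun g : X.dualAnnihilator => (g : Module.Dual (ZMod 2) V)) h
      simpa using this
  obtain ⟨f, hf⟩ := hinj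
  have hle : Module.finrank (ZMod 2) W ≤ Module.finrank (ZMod 2) X.dualAnnihilator :=
    LinearMap.finrank_le_finrank_of_injective hf
  -- dimension count
  have hann : Module.finrank (ZMod 2) X + Module.finrank (ZMod 2) X.dualAnnihilator
      = Module.finrank (ZMod 2) V := by
    have := LinearEquiv.finrank_eq (R := ZMod 2) (M := V ⧸ X)
      (N := X.dualAnnihilator) (Subspace.quotEquivAnnihilator X)
    rw [← this, add_comm]
    exact Submodule.finrank_quotient_add_finrank X
  have hV : Module.finrank (ZMod 2) V = t := by
    simp [V, Module.finrank_pi]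
  have hdim : Module.finrank (ZMod 2) W ≤ (t - 1) / 2 := by omega
  -- card count
  have hcard : (Nat.card W) = 2 ^ Module.finrank (ZMod 2) W := by
    have : Fintype.card W = Fintype.card (ZMod 2) ^ Module.finrank (ZMod 2) W :=
      Module.card_eq_pow_finrank
    simpa [Nat.card_eq_fintype_card, ZMod.card] using this
  have hsub : (D : Set V) ⊆ (W : Set V) := Submodule.subset_span
  have hDle : D.card ≤ Nat.card W := by
    have h := Set.ncard_le_ncard hsub (Set.toFinite (W : Set V))
    rwa [Set.ncard_coe_finset, ← Nat.card_coe_set_eq] at h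
  calc C.card = D.card := hDcard.symm
    _ ≤ Nat.card W := hDle
    _ = 2 ^ Module.finrank (ZMod 2) W := hcard
    _ ≤ 2 ^ ((t - 1) / 2) := Nat.pow_le_pow_right (by norm_num) hdim
end
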